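/- Suppose ℓ satisfies the Metric Loss Assumption, is bounded above by L > 0, satisfies min_{y ≠ y'} ℓ(y, y') > l for some l > 0, and W_{1,ℓ}(p_y, q_y) < δ for some δ > 0. Let f*_CC ∈ H be a measurable surjective classifier witnessing CC(κ), i.e., R_p(f*_CC) + max_{y ∈ Y} W_{1,ℓ}(f*_CC#p_{x|y}(·|y), f*_CC#q_{x|y}(·|y)) < κ, and assume the optimal couplings γ*_f ∈ Γ(f*_CC#p_x, f*_CC#q_x) and γ*_y ∈ Γ(p_y, q_y) attaining the corresponding 1-Wasserstein distances exist. Then the oracle upper bound U(f*_CC) := R_p(f*_CC) + W_{1,ℓ}(f*_CC#p_x, f*_CC#q_x) + E_y(f*_CC) satisfies U(f*_CC) ≤ 3·(κ + ((L + l)/l)·δ). -/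

import Mathlib

open MeasureTheory ProbabilityTheory

/-- A coupling of `μ` and `ν`: a joint measure on the product with the given marginals. -/
def IsCoupling {A B : Type*} [MeasurableSpace A] [MeasurableSpace B]
    (γ : Measure (A × B)) (μ : Measure A) (ν : Measure B) : Prop :=
  γ.map Prod.fst = μ ∧ γ.map Prod.snd = ν

/-- The `α`-Wasserstein distance between `μ` and `ν` with cost function `c`:
`W_{α,c}(μ,ν) = (inf_{γ ∈ Γ(μ,ν)} ∫ c^α dγ)^{1/α}`. -/
noncomputable def Wass {A B : Type*} [MeasurableSpace A] [MeasurableSpace B]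
    (α : ℝ) (c : A × B → ℝ) (μ : Measure A) (ν : Measure B) : ℝ :=
  sInf { r | ∃ γ : Measure (A × B), IsCoupling γ μ ν ∧ r = ∫ z, c z ^ α ∂γ } ^ (1 / α)

/-- The 1-Wasserstein distance between `μ` and `ν` with cost function `c`. -/
noncomputable def W1 {A B : Type*} [MeasurableSpace A] [MeasurableSpace B]
    (c : A × B → ℝ) (μ : Measure A) (ν : Measure B) : ℝ :=
  sInf { r | ∃ γ : Measure (A × B), IsCoupling γ μ ν ∧ r = ∫ z, c z ∂γ }

/-- The risk of classifier `f` under joint distribution `p`, w.r.t. loss `ℓ`. -/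
noncomputable def risk {X Y : Type*} [MeasurableSpace X] [MeasurableSpace Y]
    (ℓ : Y × Y → ℝ) (f : X → Y) (p : Measure (X × Y)) : ℝ :=
  ∫ z, ℓ (f z.1, z.2) ∂p

/-- `f#p` : pushforward of a joint measure `p` under `(x, y) ↦ (f x, y)`. -/
noncomputable def jmap {X Y : Type*} [MeasurableSpace X] [MeasurableSpace Y]
    (f : X → Y) (p : Measure (X × Y)) : Measure (Y × Y) :=
  p.map (fun z => (f z.1, z.2))

instance jmap.instIsFiniteMeasure {X Y : Type*} [MeasurableSpace X] [MeasurableSpace Y]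
    (f : X → Y) (p : Measure (X × Y)) [IsFiniteMeasure p] : IsFiniteMeasure (jmap f p) := by
  unfold jmap; infer_instance

/-!
Everything is controlled through an optimal coupling `γ_y` of the label marginals. Gluing, over
`γ_y`, near-optimal couplings of the class-conditional prediction laws `f#p_{x|a}`, `f#q_{x|b}`
gives a coupling of `f#p_x` and `f#q_x`, so `W(f#p_x, f#q_x) ≤ ∫ W(f#p_{x|a}, f#q_{x|b}) dγ_y`.
On the diagonal the integrand is at most the CC term `S`, off it at most `L ≤ (L/l) ℓ(a, b)`,
whence the integral is at most `S + (L/l) δ`. The same integral controls `R_q - R_p` up to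
`W(p_y, q_y) < δ`, because `(μ, a) ↦ ∫ ℓ(·, a) dμ` is 1-Lipschitz. Finally, coupling the two
conditional label laws in `E_y` independently and using the triangle inequality through the two
predictions gives `E_y ≤ R_p + W(f#p_x, f#q_x) + R_q`. Altogether
`U ≤ 3 R_p + 3 S + (3L/l + 1) δ`.
-/

section Coupling

variable {A B : Type*} [MeasurableSpace A] [MeasurableSpace B]
  {c : A × B → ℝ} {μ : Measure A} {ν : Measure B} {γ : Measure (A × B)}

lemma IsCoupling.isProbabilityMeasure (h : IsCoupling γ μ ν) [IsProbabilityMeasure μ] :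
    IsProbabilityMeasure γ := by
  have : IsProbabilityMeasure (γ.map Prod.fst) := h.1 ▸ ‹_›
  exact Measure.isProbabilityMeasure_of_map Prod.fst

lemma IsCoupling.integral_fst (h : IsCoupling γ μ ν) {g : A → ℝ}
    (hg : AEStronglyMeasurable g μ) : ∫ z, g z.1 ∂γ = ∫ a, g a ∂μ := by
  rw [← h.1] at hg ⊢
  exact (integral_map measurable_fst.aemeasurable hg).symm

lemma IsCoupling.integral_snd (h : IsCoupling γ μ ν) {g : B → ℝ}
    (hg : AEStronglyMeasurable g ν) : ∫ z, g z.2 ∂γ = ∫ b, g b ∂ν := by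
  rw [← h.2] at hg ⊢
  exact (integral_map measurable_snd.aemeasurable hg).symm

lemma isCoupling_prod (μ : Measure A) (ν : Measure B) [IsProbabilityMeasure μ]
    [IsProbabilityMeasure ν] : IsCoupling (μ.prod ν) μ ν := by
  constructor <;> simp

lemma W1_nonneg (hc : ∀ z, 0 ≤ c z) : 0 ≤ W1 c μ ν :=
  Real.sInf_nonneg fun _ ⟨_, _, hr⟩ => hr ▸ integral_nonneg hc

lemma W1_le_integral (hc : ∀ z, 0 ≤ c z) (hγ : IsCoupling γ μ ν) : W1 c μ ν ≤ ∫ z, c z ∂γ :=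
  csInf_le ⟨0, fun _ ⟨_, _, hr⟩ => hr ▸ integral_nonneg hc⟩ ⟨γ, hγ, rfl⟩

lemma le_W1 [IsProbabilityMeasure μ] [IsProbabilityMeasure ν] {a : ℝ}
    (h : ∀ γ : Measure (A × B), IsCoupling γ μ ν → a ≤ ∫ z, c z ∂γ) : a ≤ W1 c μ ν :=
  le_csInf ⟨_, μ.prod ν, isCoupling_prod μ ν, rfl⟩ fun _ ⟨γ, hγ, hr⟩ => hr ▸ h γ hγ

lemma exists_isCoupling_integral_lt (c : A × B → ℝ) (μ : Measure A) (ν : Measure B)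
    [IsProbabilityMeasure μ] [IsProbabilityMeasure ν] {ε : ℝ} (hε : 0 < ε) :
    ∃ γ : Measure (A × B), IsCoupling γ μ ν ∧ ∫ z, c z ∂γ < W1 c μ ν + ε := by
  obtain ⟨_, ⟨γ, hγ, rfl⟩, hlt⟩ := Real.lt_sInf_add_pos
    (s := {r | ∃ γ : Measure (A × B), IsCoupling γ μ ν ∧ r = ∫ z, c z ∂γ})
    ⟨_, μ.prod ν, isCoupling_prod μ ν, rfl⟩ hε
  exact ⟨γ, hγ, hlt⟩

end Coupling

namespace MeasureTheory.Measure

variable {α β γ δ : Type*} [MeasurableSpace α] [MeasurableSpace β] [MeasurableSpace γ]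
  [MeasurableSpace δ]

lemma map_comp_eq_comp_map {μ : Measure α} {κ : Kernel α β} {η : Kernel γ δ}
    {f : β → δ} {g : α → γ} (hf : Measurable f) (hg : Measurable g)
    (h : ∀ a, (κ a).map f = η (g a)) : (κ ∘ₘ μ).map f = η ∘ₘ μ.map g := by
  ext s hs
  rw [map_comp _ _ hf, bind_apply hs (Kernel.aemeasurable _),
    bind_apply hs (Kernel.aemeasurable _), lintegral_map (Kernel.measurable_coe _ hs) hg]
  simp_rw [Kernel.map_apply _ hf, h]

lemma integral_comp {E : Type*} [NormedAddCommGroup E] [NormedSpace ℝ E]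
    {μ : Measure α} [SFinite μ] {κ : Kernel α β} [IsSFiniteKernel κ] {f : β → E}
    (hf : Integrable f (κ ∘ₘ μ)) : ∫ b, f b ∂(κ ∘ₘ μ) = ∫ a, ∫ b, f b ∂κ a ∂μ := by
  rw [← snd_compProd, snd, integral_map measurable_snd.aemeasurable
    (by rw [← snd, snd_compProd]; exact hf.aestronglyMeasurable)]
  exact integral_compProd ((integrable_compProd_snd_iff hf.aestronglyMeasurable).2 hf)

end MeasureTheory.Measure

section FiniteCoupling

variable {A B : Type*} [MeasurableSpace A] [MeasurableSpace B] [Finite A] [Finite B]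
  [MeasurableSingletonClass A] [MeasurableSingletonClass B] {c : A × B → ℝ}

lemma W1_le_of_le (hc : ∀ z, 0 ≤ c z) {C : ℝ} (hC : ∀ z, c z ≤ C) (μ : Measure A)
    (ν : Measure B) [IsProbabilityMeasure μ] [IsProbabilityMeasure ν] : W1 c μ ν ≤ C := by
  refine (W1_le_integral hc (isCoupling_prod μ ν)).trans ?_
  simpa using integral_mono (μ := μ.prod ν) Integrable.of_finite (integrable_const C) hC

theorem W1_comp_le_integral {I J : Type*} [MeasurableSpace I] [MeasurableSpace J] [Finite I]
    [Finite J] [MeasurableSingletonClass I] [MeasurableSingletonClass J] (hc : ∀ z, 0 ≤ c z)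
    (κ : Kernel I A) (η : Kernel J B) [IsMarkovKernel κ] [IsMarkovKernel η]
    {P : Measure I} {Q : Measure J} [IsProbabilityMeasure P] {γ : Measure (I × J)}
    (hγ : IsCoupling γ P Q) :
    W1 c (κ ∘ₘ P) (η ∘ₘ Q) ≤ ∫ z, W1 c (κ z.1) (η z.2) ∂γ := by
  have := hγ.isProbabilityMeasure
  refine le_of_forall_pos_le_add fun ε hε => ?_
  choose β hβ hβlt using fun z : I × J => exists_isCoupling_integral_lt c (κ z.1) (η z.2) hε
  let glued : Kernel (I × J) (A × B) := ⟨β, .of_discrete⟩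
  have : IsMarkovKernel glued := ⟨fun z => (hβ z).isProbabilityMeasure⟩
  have hglued : IsCoupling (glued ∘ₘ γ) (κ ∘ₘ P) (η ∘ₘ Q) := by
    rw [← hγ.1, ← hγ.2]
    exact ⟨Measure.map_comp_eq_comp_map measurable_fst measurable_fst fun z => (hβ z).1,
      Measure.map_comp_eq_comp_map measurable_snd measurable_snd fun z => (hβ z).2⟩
  calc W1 c (κ ∘ₘ P) (η ∘ₘ Q) ≤ ∫ w, c w ∂(glued ∘ₘ γ) := W1_le_integral hc hglued
    _ = ∫ z, ∫ w, c w ∂β z ∂γ := Measure.integral_comp Integrable.of_finite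
    _ ≤ ∫ z, (W1 c (κ z.1) (η z.2) + ε) ∂γ :=
      integral_mono Integrable.of_finite Integrable.of_finite fun z => (hβlt z).le
    _ = ∫ z, W1 c (κ z.1) (η z.2) ∂γ + ε := by
      rw [integral_add Integrable.of_finite (integrable_const ε)]
      simp

end FiniteCoupling

section MetricLoss

variable {Y : Type*} [MeasurableSpace Y] [Finite Y] [MeasurableSingletonClass Y]
  {ℓ : Y × Y → ℝ}

lemma integral_loss_le_add_W1_add (hsymm : ∀ y y' : Y, ℓ (y, y') = ℓ (y', y))
    (htri : ∀ y₁ y₂ y₃ : Y, ℓ (y₁, y₃) ≤ ℓ (y₁, y₂) + ℓ (y₂, y₃)) (μ ν : Measure Y)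
    [IsProbabilityMeasure μ] [IsProbabilityMeasure ν] (a b : Y) :
    ∫ y, ℓ (y, b) ∂ν ≤ ∫ y, ℓ (y, a) ∂μ + W1 ℓ μ ν + ℓ (a, b) := by
  suffices ∫ y, ℓ (y, b) ∂ν - ∫ y, ℓ (y, a) ∂μ - ℓ (a, b) ≤ W1 ℓ μ ν by linarith
  refine le_W1 fun γ hγ => ?_
  have := hγ.isProbabilityMeasure
  rw [← hγ.integral_snd (g := fun y => ℓ (y, b)) Measurable.of_discrete.aestronglyMeasurable,
    ← hγ.integral_fst (g := fun y => ℓ (y, a)) Measurable.of_discrete.aestronglyMeasurable]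
  calc ∫ z, ℓ (z.2, b) ∂γ - ∫ z, ℓ (z.1, a) ∂γ - ℓ (a, b)
      = ∫ z, (ℓ (z.2, b) - ℓ (z.1, a) - ℓ (a, b)) ∂γ := by
        rw [integral_sub Integrable.of_finite (integrable_const _),
          integral_sub Integrable.of_finite Integrable.of_finite]
        simp
    _ ≤ ∫ z, ℓ z ∂γ := integral_mono Integrable.of_finite Integrable.of_finite fun z => by
        linarith [htri z.2 z.1 b, htri z.1 a b, hsymm z.1 z.2]

lemma W1_le_integral_add_add_integral (hsymm : ∀ y y' : Y, ℓ (y, y') = ℓ (y', y))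
    (hnonneg : ∀ y y' : Y, 0 ≤ ℓ (y, y'))
    (htri : ∀ y₁ y₂ y₃ : Y, ℓ (y₁, y₃) ≤ ℓ (y₁, y₂) + ℓ (y₂, y₃)) (μ ν : Measure Y)
    [IsProbabilityMeasure μ] [IsProbabilityMeasure ν] (a b : Y) :
    W1 ℓ μ ν ≤ ∫ y, ℓ (a, y) ∂μ + ℓ (a, b) + ∫ y, ℓ (b, y) ∂ν := by
  have hprod := isCoupling_prod μ ν
  calc W1 ℓ μ ν ≤ ∫ z, ℓ z ∂(μ.prod ν) := W1_le_integral (fun z => hnonneg z.1 z.2) hprod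
    _ ≤ ∫ z, (ℓ (a, z.1) + ℓ (a, b) + ℓ (b, z.2)) ∂(μ.prod ν) :=
      integral_mono Integrable.of_finite Integrable.of_finite fun z => by
        linarith [htri z.1 a z.2, htri a b z.2, hsymm z.1 a]
    _ = _ := by
      rw [integral_add Integrable.of_finite Integrable.of_finite,
        integral_add Integrable.of_finite Integrable.of_finite,
        hprod.integral_fst (g := fun y => ℓ (a, y)) Measurable.of_discrete.aestronglyMeasurable,
        hprod.integral_snd (g := fun y => ℓ (b, y)) Measurable.of_discrete.aestronglyMeasurable]
      simp

lemma integral_integral_loss_le (hsymm : ∀ y y' : Y, ℓ (y, y') = ℓ (y', y))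
    (htri : ∀ y₁ y₂ y₃ : Y, ℓ (y₁, y₃) ≤ ℓ (y₁, y₂) + ℓ (y₂, y₃)) (κ η : Kernel Y Y)
    [IsMarkovKernel κ] [IsMarkovKernel η] {P Q : Measure Y} [IsProbabilityMeasure P]
    {γ : Measure (Y × Y)} (hγ : IsCoupling γ P Q) :
    ∫ b, ∫ y, ℓ (y, b) ∂η b ∂Q ≤
      ∫ a, ∫ y, ℓ (y, a) ∂κ a ∂P + ∫ z, W1 ℓ (κ z.1) (η z.2) ∂γ + ∫ z, ℓ z ∂γ := by
  have := hγ.isProbabilityMeasure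
  rw [← hγ.integral_snd (g := fun b => ∫ y, ℓ (y, b) ∂η b)
      Measurable.of_discrete.aestronglyMeasurable,
    ← hγ.integral_fst (g := fun a => ∫ y, ℓ (y, a) ∂κ a)
      Measurable.of_discrete.aestronglyMeasurable,
    ← integral_add Integrable.of_finite Integrable.of_finite,
    ← integral_add Integrable.of_finite Integrable.of_finite]
  exact integral_mono Integrable.of_finite Integrable.of_finite fun z =>
    integral_loss_le_add_W1_add hsymm htri (κ z.1) (η z.2) z.1 z.2

lemma integral_W1_le_iSup_add_div_mul {I A B : Type*} [MeasurableSpace I] [Finite I]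
    [MeasurableSingletonClass I] [MeasurableSpace A] [MeasurableSpace B] [Finite A] [Finite B]
    [MeasurableSingletonClass A] [MeasurableSingletonClass B] {c : A × B → ℝ} {d : I × I → ℝ}
    {L l : ℝ} (hc : ∀ z, 0 ≤ c z) (hcL : ∀ z, c z ≤ L) (hL : 0 ≤ L) (hd : ∀ z, 0 ≤ d z)
    (hl : 0 < l) (hdl : ∀ i j, i ≠ j → l ≤ d (i, j)) (κ : Kernel I A) (η : Kernel I B)
    [IsMarkovKernel κ] [IsMarkovKernel η] (γ : Measure (I × I)) [IsProbabilityMeasure γ] :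
    ∫ z, W1 c (κ z.1) (η z.2) ∂γ ≤ (⨆ k, W1 c (κ k) (η k)) + L / l * ∫ z, d z ∂γ := by
  set S := ⨆ k, W1 c (κ k) (η k)
  have hLl : 0 ≤ L / l := div_nonneg hL hl.le
  have hpt : ∀ i j, W1 c (κ i) (η j) ≤ S + L / l * d (i, j) := by
    intro i j
    rcases eq_or_ne i j with rfl | hij
    · have := le_ciSup (Set.finite_range fun k => W1 c (κ k) (η k)).bddAbove i
      have := mul_nonneg hLl (hd (i, i))
      linarith
    · calc W1 c (κ i) (η j) ≤ L := W1_le_of_le hc hcL _ _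
        _ = L / l * l := (div_mul_cancel₀ L hl.ne').symm
        _ ≤ L / l * d (i, j) := mul_le_mul_of_nonneg_left (hdl i j hij) hLl
        _ ≤ S + L / l * d (i, j) := le_add_of_nonneg_left (Real.iSup_nonneg fun k => W1_nonneg hc)
  calc ∫ z, W1 c (κ z.1) (η z.2) ∂γ ≤ ∫ z, (S + L / l * d z) ∂γ :=
        integral_mono Integrable.of_finite Integrable.of_finite fun z => hpt z.1 z.2
    _ = S + L / l * ∫ z, d z ∂γ := by
        rw [integral_add (integrable_const _) Integrable.of_finite, integral_const_mul]
        simp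

variable [Nonempty Y]

theorem integral_W1_condKernel_le (hsymm : ∀ y y' : Y, ℓ (y, y') = ℓ (y', y))
    (hnonneg : ∀ y y' : Y, 0 ≤ ℓ (y, y'))
    (htri : ∀ y₁ y₂ y₃ : Y, ℓ (y₁, y₃) ≤ ℓ (y₁, y₂) + ℓ (y₂, y₃)) (ρ σ : Measure (Y × Y))
    [IsProbabilityMeasure ρ] [IsProbabilityMeasure σ] {γ : Measure (Y × Y)}
    (hγ : IsCoupling γ ρ.fst σ.fst) :
    ∫ z, W1 ℓ (ρ.condKernel z.1) (σ.condKernel z.2) ∂γ ≤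
      ∫ z, ℓ z ∂ρ + ∫ z, ℓ z ∂γ + ∫ z, ℓ z ∂σ := by
  have := hγ.isProbabilityMeasure
  calc ∫ z, W1 ℓ (ρ.condKernel z.1) (σ.condKernel z.2) ∂γ
      ≤ ∫ z, (∫ y, ℓ (z.1, y) ∂ρ.condKernel z.1 + ℓ z + ∫ y, ℓ (z.2, y) ∂σ.condKernel z.2) ∂γ :=
        integral_mono Integrable.of_finite Integrable.of_finite fun z =>
          W1_le_integral_add_add_integral hsymm hnonneg htri _ _ z.1 z.2
    _ = _ := by
      rw [integral_add Integrable.of_finite Integrable.of_finite,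
        integral_add Integrable.of_finite Integrable.of_finite,
        hγ.integral_fst (g := fun a => ∫ y, ℓ (a, y) ∂ρ.condKernel a)
          Measurable.of_discrete.aestronglyMeasurable,
        hγ.integral_snd (g := fun b => ∫ y, ℓ (b, y) ∂σ.condKernel b)
          Measurable.of_discrete.aestronglyMeasurable,
        Measure.integral_condKernel Integrable.of_finite,
        Measure.integral_condKernel Integrable.of_finite]

end MetricLoss

section Classifier

variable {X Y : Type*} [MeasurableSpace X] [MeasurableSpace Y] {f : X → Y}

lemma fst_jmap (hf : Measurable f) (p : Measure (X × Y)) :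
    (jmap f p).fst = p.map (fun z => f z.1) := by
  rw [Measure.fst, jmap, Measure.map_map measurable_fst (by fun_prop)]
  rfl

lemma risk_eq_integral_jmap [Finite Y] [MeasurableSingletonClass Y] (ℓ : Y × Y → ℝ)
    (hf : Measurable f) (p : Measure (X × Y)) : risk ℓ f p = ∫ z, ℓ z ∂(jmap f p) :=
  (integral_map (by fun_prop) Measurable.of_discrete.aestronglyMeasurable).symm

variable [StandardBorelSpace X] [Nonempty X]

lemma map_fst_eq_comp_condKernel (hf : Measurable f) (p : Measure (X × Y)) [IsFiniteMeasure p] :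
    p.map (fun z => f z.1) = ((p.map Prod.swap).condKernel.map f) ∘ₘ p.map Prod.snd := by
  set ρ := p.map Prod.swap
  calc p.map (fun z => f z.1) = ρ.snd.map f := by
        rw [Measure.snd, Measure.map_map measurable_snd measurable_swap,
          Measure.map_map hf (by fun_prop)]
        rfl
    _ = (ρ.condKernel ∘ₘ ρ.fst).map f := by rw [← Measure.snd_compProd, ρ.disintegrate]
    _ = _ := by rw [Measure.map_comp _ _ hf, Measure.fst_map_swap]; rfl

lemma risk_eq_integral_condKernel [Finite Y] [MeasurableSingletonClass Y] (ℓ : Y × Y → ℝ)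
    (hf : Measurable f) (p : Measure (X × Y)) [IsFiniteMeasure p] :
    risk ℓ f p = ∫ a, ∫ y, ℓ (y, a) ∂(p.map Prod.swap).condKernel.map f a ∂p.map Prod.snd := by
  set ρ := p.map Prod.swap
  have hg : Measurable fun w : Y × X => (f w.2, w.1) := by fun_prop
  calc risk ℓ f p = ∫ w, ℓ (f w.2, w.1) ∂ρ :=
        (integral_map measurable_swap.aemeasurable
          (Measurable.of_discrete.comp hg).aestronglyMeasurable).symm
    _ = ∫ a, ∫ x, ℓ (f x, a) ∂ρ.condKernel a ∂ρ.fst :=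
        (Measure.integral_condKernel (Integrable.of_finite.comp_measurable hg)).symm
    _ = _ := by
      rw [Measure.fst_map_swap]
      congr with a
      rw [Kernel.map_apply _ hf,
        integral_map hf.aemeasurable Measurable.of_discrete.aestronglyMeasurable]

end Classifier

theorem statement15_general {X Y : Type*} [MeasurableSpace X] [StandardBorelSpace X] [Nonempty X]
    [MeasurableSpace Y] [Fintype Y] [MeasurableSingletonClass Y] [Nonempty Y]
    (ℓ : Y × Y → ℝ)
    (hsymm : ∀ y y' : Y, ℓ (y, y') = ℓ (y', y))
    (hnonneg : ∀ y y' : Y, 0 ≤ ℓ (y, y'))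
    (htri : ∀ y₁ y₂ y₃ : Y, ℓ (y₁, y₃) ≤ ℓ (y₁, y₂) + ℓ (y₂, y₃))
    (L : ℝ) (hL : 0 < L) (hbound : ∀ y y' : Y, ℓ (y, y') ≤ L)
    (l : ℝ) (hl : 0 < l) (hlow : ∀ y y' : Y, y ≠ y' → l < ℓ (y, y'))
    (p q : Measure (X × Y)) [IsProbabilityMeasure p] [IsProbabilityMeasure q]
    (δ : ℝ) (hδ : 0 < δ) (hshift : W1 ℓ (p.map Prod.snd) (q.map Prod.snd) < δ)
    (κ : ℝ)
    (f : X → Y) (hf : Measurable f)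
    (hCC : risk ℓ f p +
      (⨆ y : Y, W1 ℓ (((p.map Prod.swap).condKernel y).map f)
        (((q.map Prod.swap).condKernel y).map f)) < κ)
    (γf : Measure (Y × Y))
    (hγf : IsCoupling γf (p.map (fun z => f z.1)) (q.map (fun z => f z.1)))
    (hγfopt : ∫ z, ℓ z ∂γf = W1 ℓ (p.map (fun z => f z.1)) (q.map (fun z => f z.1)))
    (γy : Measure (Y × Y))
    (hγy : IsCoupling γy (p.map Prod.snd) (q.map Prod.snd))
    (hγyopt : ∫ z, ℓ z ∂γy = W1 ℓ (p.map Prod.snd) (q.map Prod.snd)) :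
    risk ℓ f p + W1 ℓ (p.map (fun z => f z.1)) (q.map (fun z => f z.1)) +
        (∫ z, W1 ℓ ((jmap f p).condKernel z.1) ((jmap f q).condKernel z.2) ∂γf) ≤
      3 * (κ + (L + l) / l * δ) := by
  have hℓ : ∀ z, 0 ≤ ℓ z := fun z => hnonneg z.1 z.2
  have := Measure.isProbabilityMeasure_map (μ := p) measurable_snd.aemeasurable
  have := hγy.isProbabilityMeasure
  have : IsProbabilityMeasure (jmap f p) := Measure.isProbabilityMeasure_map (by fun_prop)
  have : IsProbabilityMeasure (jmap f q) := Measure.isProbabilityMeasure_map (by fun_prop)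
  set Kp := (p.map Prod.swap).condKernel.map f
  set Kq := (q.map Prod.swap).condKernel.map f
  have := Kernel.IsMarkovKernel.map (p.map Prod.swap).condKernel hf
  have := Kernel.IsMarkovKernel.map (q.map Prod.swap).condKernel hf
  set G := ∫ z, W1 ℓ (Kp z.1) (Kq z.2) ∂γy
  have hW : W1 ℓ (p.map fun z => f z.1) (q.map fun z => f z.1) ≤ G := by
    rw [map_fst_eq_comp_condKernel hf p, map_fst_eq_comp_condKernel hf q]
    exact W1_comp_le_integral hℓ Kp Kq hγy
  have hRq : risk ℓ f q ≤ risk ℓ f p + G + ∫ z, ℓ z ∂γy := by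
    rw [risk_eq_integral_condKernel ℓ hf p, risk_eq_integral_condKernel ℓ hf q]
    exact integral_integral_loss_le hsymm htri Kp Kq hγy
  have hG : G ≤ (⨆ y, W1 ℓ (Kp y) (Kq y)) + L / l * ∫ z, ℓ z ∂γy :=
    integral_W1_le_iSup_add_div_mul hℓ (fun z => hbound z.1 z.2) hL.le hℓ hl
      (fun y y' h => (hlow y y' h).le) Kp Kq γy
  have hE : ∫ z, W1 ℓ ((jmap f p).condKernel z.1) ((jmap f q).condKernel z.2) ∂γf ≤
      risk ℓ f p + W1 ℓ (p.map fun z => f z.1) (q.map fun z => f z.1) + risk ℓ f q := by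
    rw [risk_eq_integral_jmap ℓ hf p, risk_eq_integral_jmap ℓ hf q, ← hγfopt]
    rw [← fst_jmap hf p, ← fst_jmap hf q] at hγf
    exact integral_W1_condKernel_le hsymm hnonneg htri _ _ hγf
  have hCC' : risk ℓ f p + ⨆ y, W1 ℓ (Kp y) (Kq y) < κ := by
    simpa only [Kp, Kq, Kernel.map_apply _ hf] using hCC
  have hD : ∫ z, ℓ z ∂γy < δ := hγyopt ▸ hshift
  have hLD : L / l * ∫ z, ℓ z ∂γy ≤ L / l * δ := by gcongr
  rw [add_div, div_self hl.ne']
  linarith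

theorem statement15 {X Y : Type*} [MeasurableSpace X] [StandardBorelSpace X] [Nonempty X]
    [MeasurableSpace Y] [Fintype Y] [MeasurableSingletonClass Y] [Nonempty Y]
    (ℓ : Y × Y → ℝ) (hℓmeas : Measurable ℓ)
    (hsymm : ∀ y y' : Y, ℓ (y, y') = ℓ (y', y))
    (hnonneg : ∀ y y' : Y, 0 ≤ ℓ (y, y'))
    (htri : ∀ y₁ y₂ y₃ : Y, ℓ (y₁, y₃) ≤ ℓ (y₁, y₂) + ℓ (y₂, y₃))
    (hid : ∀ y y' : Y, ℓ (y, y') = 0 ↔ y = y')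
    (L : ℝ) (hL : 0 < L) (hbound : ∀ y y' : Y, ℓ (y, y') ≤ L)
    (l : ℝ) (hl : 0 < l) (hlow : ∀ y y' : Y, y ≠ y' → l < ℓ (y, y'))
    (p q : Measure (X × Y)) [IsProbabilityMeasure p] [IsProbabilityMeasure q]
    (δ : ℝ) (hδ : 0 < δ) (hshift : W1 ℓ (p.map Prod.snd) (q.map Prod.snd) < δ)
    (κ : ℝ) (hκ : 0 < κ)
    (f : X → Y) (hf : Measurable f) (hsurj : Function.Surjective f)
    (hCC : risk ℓ f p +
      (⨆ y : Y, W1 ℓ (((p.map Prod.swap).condKernel y).map f)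
        (((q.map Prod.swap).condKernel y).map f)) < κ)
    (γf : Measure (Y × Y))
    (hγf : IsCoupling γf (p.map (fun z => f z.1)) (q.map (fun z => f z.1)))
    (hγfopt : ∫ z, ℓ z ∂γf = W1 ℓ (p.map (fun z => f z.1)) (q.map (fun z => f z.1)))
    (γy : Measure (Y × Y))
    (hγy : IsCoupling γy (p.map Prod.snd) (q.map Prod.snd))
    (hγyopt : ∫ z, ℓ z ∂γy = W1 ℓ (p.map Prod.snd) (q.map Prod.snd)) :
    risk ℓ f p + W1 ℓ (p.map (fun z => f z.1)) (q.map (fun z => f z.1)) +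
        (∫ z, W1 ℓ ((jmap f p).condKernel z.1) ((jmap f q).condKernel z.2) ∂γf) ≤
      3 * (κ + (L + l) / l * δ) :=
  statement15_general ℓ hsymm hnonneg htri L hL hbound l hl hlow p q δ hδ hshift κ f hf hCC γf hγf
    hγfopt γy hγy hγyopt
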